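/- Let ψ : {1,…,n} → ℂ and let P be the homogeneous operator of degree 0 associated to ψ, i.e. P(e_i) = ψ(i)·e_i for all i. Suppose P is an average operator, i.e. P(x)·P(y) = P(x·P(y)) for all x, y ∈ A. Then: (a) if there exists an index with ψ nonzero, t is the least index in {1,…,n} with ψ(t) ≠ 0, and t ≤ ⌊n/2⌋, then for every 1 ≤ i ≤ n: ψ(i) = ψ(t) if t divides i, and ψ(i) = 0 if t does not divide i; (b) if ψ(t) = 0 for all 1 ≤ t ≤ ⌊n/2⌋, then ψ is nonzero at most at one index: for all r, s with ⌊n/2⌋ < r < s ≤ n, either ψ(r) = 0 or ψ(s) = 0. -/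
import Mathlib


open Finset

/-- Coordinate space of the `n`-dimensional complex null-filiform associative algebra,
with respect to the basis `e_1, …, e_n` (coordinate `m : Fin n` corresponds to `e_{m+1}`). -/
abbrev NF (n : ℕ) : Type := Fin n → ℂ

/-- Multiplication of the null-filiform algebra: `e_i · e_j = e_{i+j}` if `i + j ≤ n`
and `e_i · e_j = 0` if `i + j > n`, extended bilinearly. -/
noncomputable def nfMul {n : ℕ} (x y : NF n) : NF n :=
  fun m => ∑ i : Fin n, ∑ j : Fin n,
    if (i : ℕ) + (j : ℕ) + 1 = (m : ℕ) then x i * y j else 0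

/-- The basis element `e_k`, for `1 ≤ k ≤ n` (it is `0` if `k = 0` or `k > n`). -/
noncomputable def nfE (n k : ℕ) : NF n := fun m => if (m : ℕ) + 1 = k then 1 else 0

/-- The `k`-th power (for `k ≥ 1`) of an element of the null-filiform algebra. -/
noncomputable def nfPow {n : ℕ} (x : NF n) : ℕ → NF n
  | 0 => 0
  | 1 => x
  | k + 2 => nfMul (nfPow x (k + 1)) x

lemma nfMul_smul_left {n : ℕ} (c : ℂ) (x y : NF n) :
    nfMul (c • x) y = c • nfMul x y := by
  funext m
  simp only [nfMul, Pi.smul_apply, smul_eq_mul, Finset.mul_sum, mul_ite, mul_zero, mul_assoc]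

lemma nfMul_smul_right {n : ℕ} (c : ℂ) (x y : NF n) :
    nfMul x (c • y) = c • nfMul x y := by
  funext m
  simp only [nfMul, Pi.smul_apply, smul_eq_mul, Finset.mul_sum, mul_ite, mul_zero]
  congr 1; funext i; congr 1; funext j
  split <;> ring_nf

lemma nfE_mul {n a b : ℕ} (ha : 1 ≤ a) (ha' : a ≤ n) (hb : 1 ≤ b) (hb' : b ≤ n) :
    nfMul (nfE n a) (nfE n b) = nfE n (a + b) := by
  funext m
  set ia : Fin n := ⟨a - 1, by omega⟩ with hia
  set jb : Fin n := ⟨b - 1, by omega⟩ with hjb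
  have key : ∀ i j : Fin n,
      (if (i : ℕ) + (j : ℕ) + 1 = (m : ℕ) then nfE n a i * nfE n b j else 0)
      = if i = ia then (if j = jb then
          (if (i : ℕ) + (j : ℕ) + 1 = (m : ℕ) then (1 : ℂ) else 0) else 0) else 0 := by
    intro i j
    simp only [nfE]
    by_cases hi : i = ia
    · by_cases hj : j = jb
      · subst hi; subst hj
        have h1 : (ia : ℕ) + 1 = a := by simp [hia]; omega
        have h2 : (jb : ℕ) + 1 = b := by simp [hjb]; omega
        simp [h1, h2]
      · have : ¬ ((j : ℕ) + 1 = b) := by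
          intro h; apply hj; apply Fin.ext; simp [hjb]; omega
        simp [hi, hj, this]
    · have : ¬ ((i : ℕ) + 1 = a) := by
        intro h; apply hi; apply Fin.ext; simp [hia]; omega
      simp [hi, this]
  simp only [nfMul, key]
  have h2 : ∀ i : Fin n, (∑ j : Fin n, if i = ia then (if j = jb then
      (if (i : ℕ) + (j : ℕ) + 1 = (m : ℕ) then (1 : ℂ) else 0) else 0) else 0)
      = if i = ia then (if (i : ℕ) + (jb : ℕ) + 1 = (m : ℕ) then (1 : ℂ) else 0) else 0 := by
    intro i
    split
    · rw [Finset.sum_ite_eq' Finset.univ jb]; simp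
    · simp
  simp only [h2]
  rw [Finset.sum_ite_eq' Finset.univ ia]
  simp only [Finset.mem_univ, if_true, nfE]
  have hia' : (ia : ℕ) = a - 1 := rfl
  have hjb' : (jb : ℕ) = b - 1 := rfl
  split <;> split <;> first | rfl | omega

/-- Average operator, homogeneous of degree `0`: (a) if `t` is the least index with
`ψ(t) ≠ 0` and `t ≤ ⌊n/2⌋`, then `ψ(i) = ψ(t)` when `t ∣ i` and `ψ(i) = 0` otherwise;
(b) if `ψ` vanishes on `{1, …, ⌊n/2⌋}`, then `ψ` is nonzero at most at one index. -/
theorem average_degree0 (n : ℕ) (hn : 1 ≤ n) (ψ : ℕ → ℂ)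
    (P : NF n →ₗ[ℂ] NF n)
    (hP : ∀ i, 1 ≤ i → i ≤ n → P (nfE n i) = ψ i • nfE n i)
    (hAvg : ∀ x y : NF n, nfMul (P x) (P y) = P (nfMul x (P y))) :
    (∀ t, 1 ≤ t → t ≤ n / 2 → ψ t ≠ 0 →
      (∀ s, 1 ≤ s → s < t → ψ s = 0) →
      ∀ i, 1 ≤ i → i ≤ n →
        (t ∣ i → ψ i = ψ t) ∧ (¬ t ∣ i → ψ i = 0)) ∧
    ((∀ t, 1 ≤ t → t ≤ n / 2 → ψ t = 0) →
      ∀ r s, n / 2 < r → r < s → s ≤ n → ψ r = 0 ∨ ψ s = 0) := by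
  have key : ∀ a b : ℕ, 1 ≤ a → 1 ≤ b → a + b ≤ n → ψ a * ψ b = ψ b * ψ (a + b) := by
    intro a b ha hb hab
    have ha' : a ≤ n := by omega
    have hb' : b ≤ n := by omega
    have h1 := hAvg (nfE n a) (nfE n b)
    rw [hP a ha ha', hP b hb hb', nfMul_smul_left, nfMul_smul_right,
      nfE_mul ha ha' hb hb', map_smul,
      hP (a + b) (by omega) hab] at h1
    have h2 := congrFun h1 ⟨a + b - 1, by omega⟩
    simp only [Pi.smul_apply, smul_eq_mul, nfE] at h2
    have hc : a + b - 1 + 1 = a + b := by omega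
    rw [if_pos hc] at h2
    simpa [mul_comm, mul_assoc] using h2
  constructor
  · intro t ht1 ht2 htne hmin
    have nondiv : ∀ i, 1 ≤ i → i ≤ n → ¬ t ∣ i → ψ i = 0 := by
      intro i
      induction i using Nat.strong_induction_on with
      | _ i ih =>
        intro h1 h2 hnd
        by_cases hlt : i < t
        · exact hmin i h1 hlt
        · have hti : t < i := by
            rcases Nat.lt_or_ge i t with h | h
            · omega
            · rcases Nat.eq_or_lt_of_le h with h' | h'
              · exact absurd (h' ▸ dvd_refl t) hnd
              · exact h'
          have hnd' : ¬ t ∣ (i - t) := by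
            intro hd
            exact hnd (by
              have := Nat.dvd_add hd (dvd_refl t)
              rwa [Nat.sub_add_cancel (le_of_lt hti)] at this)
          have h3 := key (i - t) t (by omega) ht1 (by omega)
          rw [Nat.sub_add_cancel (by omega),
            ih (i - t) (by omega) (by omega) (by omega) hnd', zero_mul] at h3
          exact (mul_eq_zero.mp h3.symm).resolve_left htne
    intro i hi1 hi2
    constructor
    · intro hdvd
      obtain ⟨c, hc⟩ := hdvd
      have hc1 : 1 ≤ c := by
        rcases Nat.eq_zero_or_pos c with h | h
        · rw [h, Nat.mul_zero] at hc; omega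
        · exact h
      have mult : ∀ k, 1 ≤ k → t * k ≤ n → ψ (t * k) = ψ t := by
        intro k hk
        induction k, hk using Nat.le_induction with
        | base => simp
        | succ k hk ih =>
          intro hle
          rw [Nat.mul_succ] at hle ⊢
          have htk : 1 ≤ t * k := Nat.one_le_iff_ne_zero.mpr (by positivity)
          have h3 := key (t * k) t htk ht1 hle
          rw [ih (by omega)] at h3
          exact (mul_left_cancel₀ htne h3).symm
      rw [hc]
      exact mult c hc1 (hc ▸ hi2)
    · exact nondiv i hi1 hi2
  · intro hvan r s hr hrs hsn
    by_contra hcon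
    push_neg at hcon
    obtain ⟨hr0, hs0⟩ := hcon
    have h3 := key (s - r) r (by omega) (by omega) (by omega)
    rw [Nat.sub_add_cancel (by omega)] at h3
    rw [hvan (s - r) (by omega) (by omega), zero_mul] at h3
    exact hs0 ((mul_eq_zero.mp h3.symm).resolve_left hr0)
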